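/- Let H : S¹ × ℝ^{2n} → ℝ be a weakly asymptotically quadratic Hamiltonian, with smooth path A : S¹ → Sym(2n) satisfying sup_t |∇H_t(z) − A_t z| = o(|z|) as |z| → ∞, which is non-degenerate at infinity: the time-1 fundamental matrix M(1) of Ṁ(t) = −J₀A_t M(t), M(0) = I, satisfies det(M(1) − I) ≠ 0. Then there exists a constant R > 0 such that every 1-periodic orbit of H, i.e. every smooth x : [0,1] → ℝ^{2n} with ẋ(t) = −J₀∇H_t(x(t)) and x(0) = x(1), satisfies sup_{t∈[0,1]} |x(t)| ≤ R. -/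

import Mathlib

open scoped RealInnerProductSpace

noncomputable section

/-- The standard symplectic matrix `J₀ = [[0, -Iₙ],[Iₙ, 0]]` on `ℝ^{2n} = ℝ^n ⊕ ℝ^n`. -/
def J0 (n : ℕ) : Matrix (Fin n ⊕ Fin n) (Fin n ⊕ Fin n) ℝ :=
  Matrix.fromBlocks 0 (-1) 1 0

/-- The action of a `2n × 2n` real matrix on euclidean space `ℝ^{2n}`. -/
def mv {n : ℕ} (A : Matrix (Fin n ⊕ Fin n) (Fin n ⊕ Fin n) ℝ)
    (z : EuclideanSpace ℝ (Fin n ⊕ Fin n)) : EuclideanSpace ℝ (Fin n ⊕ Fin n) :=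
  Matrix.toEuclideanLin A z

namespace Stmt4Aux

variable {n : ℕ}

/-- The matrix action as a continuous linear map. -/
def matCLM (B : Matrix (Fin n ⊕ Fin n) (Fin n ⊕ Fin n) ℝ) :
    EuclideanSpace ℝ (Fin n ⊕ Fin n) →L[ℝ] EuclideanSpace ℝ (Fin n ⊕ Fin n) :=
  LinearMap.toContinuousLinearMap (Matrix.toEuclideanLin B)

lemma matCLM_apply (B : Matrix (Fin n ⊕ Fin n) (Fin n ⊕ Fin n) ℝ)
    (z : EuclideanSpace ℝ (Fin n ⊕ Fin n)) : matCLM B z = mv B z := rfl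

lemma mv_norm_le (B : Matrix (Fin n ⊕ Fin n) (Fin n ⊕ Fin n) ℝ)
    (z : EuclideanSpace ℝ (Fin n ⊕ Fin n)) : ‖mv B z‖ ≤ ‖matCLM B‖ * ‖z‖ :=
  (matCLM B).le_opNorm z

lemma mv_mul (B C : Matrix (Fin n ⊕ Fin n) (Fin n ⊕ Fin n) ℝ)
    (z : EuclideanSpace ℝ (Fin n ⊕ Fin n)) : mv (B * C) z = mv B (mv C z) := by
  simp [mv, Matrix.toEuclideanLin_apply, Matrix.mulVec_mulVec]

lemma mv_one (z : EuclideanSpace ℝ (Fin n ⊕ Fin n)) : mv 1 z = z := by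
  simp [mv, Matrix.toEuclideanLin_apply]

lemma mv_neg (B : Matrix (Fin n ⊕ Fin n) (Fin n ⊕ Fin n) ℝ)
    (z : EuclideanSpace ℝ (Fin n ⊕ Fin n)) : mv (-B) z = -mv B z := by
  simp [mv, Matrix.toEuclideanLin_apply, Matrix.neg_mulVec]

lemma mv_sub_mat (B C : Matrix (Fin n ⊕ Fin n) (Fin n ⊕ Fin n) ℝ)
    (z : EuclideanSpace ℝ (Fin n ⊕ Fin n)) : mv (B - C) z = mv B z - mv C z := by
  simp [mv, Matrix.toEuclideanLin_apply, Matrix.sub_mulVec]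

lemma mv_sub (B : Matrix (Fin n ⊕ Fin n) (Fin n ⊕ Fin n) ℝ)
    (z w : EuclideanSpace ℝ (Fin n ⊕ Fin n)) : mv B (z - w) = mv B z - mv B w := by
  simp [mv]

lemma mv_apply (B : Matrix (Fin n ⊕ Fin n) (Fin n ⊕ Fin n) ℝ)
    (z : EuclideanSpace ℝ (Fin n ⊕ Fin n)) (i : Fin n ⊕ Fin n) :
    mv B z i = ∑ j, B i j * z j := by
  simp [mv, Matrix.toEuclideanLin_apply, Matrix.mulVec, dotProduct]

lemma continuous_matCLM : Continuous (matCLM (n := n)) := by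
  have h : IsLinearMap ℝ (matCLM (n := n)) := by
    constructor
    · intro x y; ext z; simp [matCLM]
    · intro c x; ext z; simp [matCLM]
  exact (h.mk' _).continuous_of_finiteDimensional

/-- Derivative of `t ↦ M t • x₀` from entrywise derivatives. -/
lemma hasDeriv_mv {M : ℝ → Matrix (Fin n ⊕ Fin n) (Fin n ⊕ Fin n) ℝ}
    {D : Matrix (Fin n ⊕ Fin n) (Fin n ⊕ Fin n) ℝ}
    (x0 : EuclideanSpace ℝ (Fin n ⊕ Fin n)) {s : Set ℝ} {t : ℝ}
    (h : ∀ i j, HasDerivWithinAt (fun s => M s i j) (D i j) s t) :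
    HasDerivWithinAt (fun s => mv (M s) x0) (mv D x0) s t := by
  set L := PiLp.continuousLinearEquiv 2 ℝ (fun _ : Fin n ⊕ Fin n => ℝ)
  have hg : HasDerivWithinAt
      (fun s => (fun i => ∑ j, M s i j * x0 j : Fin n ⊕ Fin n → ℝ))
      (fun i => ∑ j, D i j * x0 j) s t := by
    rw [hasDerivWithinAt_pi]
    intro i
    exact HasDerivWithinAt.fun_sum fun j _ => (h i j).mul_const _
  have key := (L.symm.hasFDerivAt).comp_hasDerivWithinAt t hg
  have e1 : (fun s => mv (M s) x0) = ⇑L.symm ∘ fun s i => ∑ j, M s i j * x0 j := by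
    funext s; ext i; simp [L, mv, Matrix.toEuclideanLin_apply, Matrix.mulVec, dotProduct]
  have e2 : mv D x0 = L.symm fun i => ∑ j, D i j * x0 j := by
    ext i; simp [L, mv, Matrix.toEuclideanLin_apply, Matrix.mulVec, dotProduct]
  rw [e1, e2]; exact key

/-- Joint continuity of the gradient of a smooth function. -/
lemma continuous_gradient {H : ℝ → EuclideanSpace ℝ (Fin n ⊕ Fin n) → ℝ}
    (hH : ContDiff ℝ (⊤ : ℕ∞) fun p : ℝ × EuclideanSpace ℝ (Fin n ⊕ Fin n) => H p.1 p.2) :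
    Continuous (fun p : ℝ × EuclideanSpace ℝ (Fin n ⊕ Fin n) => gradient (H p.1) p.2) := by
  let E := EuclideanSpace ℝ (Fin n ⊕ Fin n)
  let F := fun p : ℝ × E => H p.1 p.2
  have hdF : Differentiable ℝ F := hH.differentiable (by simp)
  have key : ∀ p : ℝ × E, gradient (H p.1) p.2 =
      (InnerProductSpace.toDual ℝ E).symm
        ((fderiv ℝ F p).comp (ContinuousLinearMap.inr ℝ ℝ E)) := by
    intro p
    have h1 : HasFDerivAt (fun z : E => (p.1, z)) (ContinuousLinearMap.inr ℝ ℝ E) p.2 :=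
      hasFDerivAt_prodMk_right p.1 p.2
    have h2 : HasFDerivAt (H p.1)
        ((fderiv ℝ F p).comp (ContinuousLinearMap.inr ℝ ℝ E)) p.2 := by
      have := (hdF p).hasFDerivAt.comp p.2 h1
      exact this
    rw [gradient, h2.fderiv]
  have hc1 : Continuous (fderiv ℝ F) := hH.continuous_fderiv (by simp)
  have hc2 : Continuous fun p : ℝ × E =>
      (fderiv ℝ F p).comp (ContinuousLinearMap.inr ℝ ℝ E) :=
    (((ContinuousLinearMap.compL ℝ E (ℝ × E) ℝ).flip
      (ContinuousLinearMap.inr ℝ ℝ E)).continuous).comp hc1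
  have hc3 := ((InnerProductSpace.toDual ℝ E).symm.continuous).comp hc2
  rw [funext key]; exact hc3

/-- Upgrade an `Icc`-derivative to an `Ici`-derivative at interior-from-the-right points. -/
lemma hasDerivWithinAt_Ici {E : Type*} [NormedAddCommGroup E] [NormedSpace ℝ E]
    {f : ℝ → E} {d : E} {t : ℝ} (ht : t ∈ Set.Ico (0:ℝ) 1)
    (h : HasDerivWithinAt f d (Set.Icc (0:ℝ) 1) t) : HasDerivWithinAt f d (Set.Ici t) t :=
  h.mono_of_mem_nhdsWithin (Icc_mem_nhdsGE_of_mem ⟨ht.1, ht.2⟩)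

lemma exp_aux (K : ℝ) (hK : 0 ≤ K) : Real.exp K - 1 ≤ K * Real.exp K := by
  have h1 : 1 + (-K) ≤ Real.exp (-K) := by linarith [Real.add_one_le_exp (-K)]
  have h2 : Real.exp (-K) * Real.exp K = 1 := by
    rw [← Real.exp_add]; simp
  nlinarith [Real.exp_pos K]

lemma gronwallBound_le (δ K c K' x : ℝ) (hδ : 0 ≤ δ) (hc : 0 ≤ c) (hK : 0 < K)
    (hKK : K ≤ K') (hx0 : 0 ≤ x) (hx1 : x ≤ 1) :
    gronwallBound δ K c x ≤ Real.exp K' * (δ + c) := by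
  rw [gronwallBound_of_K_ne_0 hK.ne']
  have hKx : K * x ≤ K' := le_trans (by nlinarith) hKK
  have e1 : Real.exp (K * x) ≤ Real.exp K' := Real.exp_le_exp.2 hKx
  have e2 : Real.exp (K * x) - 1 ≤ K * Real.exp K' := by
    have := exp_aux K hK.le
    have h3 : Real.exp K ≤ Real.exp K' := Real.exp_le_exp.2 hKK
    have h4 : Real.exp (K * x) ≤ Real.exp K := Real.exp_le_exp.2 (by nlinarith)
    nlinarith
  have h5 : c / K * (Real.exp (K * x) - 1) ≤ c * Real.exp K' := by
    have h6 : c / K * (Real.exp (K * x) - 1) ≤ c / K * (K * Real.exp K') := by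
      apply mul_le_mul_of_nonneg_left e2 (by positivity)
    calc c / K * (Real.exp (K * x) - 1) ≤ c / K * (K * Real.exp K') := h6
      _ = c * Real.exp K' := by field_simp
  nlinarith [Real.exp_pos K', mul_le_mul_of_nonneg_left e1 hδ]

end Stmt4Aux

set_option maxHeartbeats 1000000

open Stmt4Aux in
/-- If `H` is weakly asymptotically quadratic, with quadratic part given by
the smooth path of symmetric matrices `A`, and non-degenerate at infinity (the time-1
fundamental matrix `M(1)` of `Ṁ = −J₀A_t M`, `M(0) = I`, has `det(M(1) − I) ≠ 0`), then
there is `R > 0` such that every 1-periodic orbit `x` of `H` satisfies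
`sup_{t∈[0,1]} |x(t)| ≤ R`. -/
theorem stmt_4 (n : ℕ)
    (H : ℝ → EuclideanSpace ℝ (Fin n ⊕ Fin n) → ℝ)
    (A : ℝ → Matrix (Fin n ⊕ Fin n) (Fin n ⊕ Fin n) ℝ)
    (hH : ContDiff ℝ (⊤ : ℕ∞) fun p : ℝ × EuclideanSpace ℝ (Fin n ⊕ Fin n) => H p.1 p.2)
    (hHper : ∀ t z, H (t + 1) z = H t z)
    (hA : ∀ i j, ContDiff ℝ (⊤ : ℕ∞) fun t => A t i j)
    (hAper : ∀ t, A (t + 1) = A t)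
    (hAsymm : ∀ t, (A t).IsSymm)
    (hsub : ∀ ε > (0 : ℝ), ∃ M > (0 : ℝ), ∀ z : EuclideanSpace ℝ (Fin n ⊕ Fin n),
      M < ‖z‖ → ∀ t : ℝ, ‖gradient (H t) z - mv (A t) z‖ ≤ ε * ‖z‖)
    (M : ℝ → Matrix (Fin n ⊕ Fin n) (Fin n ⊕ Fin n) ℝ)
    (hM0 : M 0 = 1)
    (hMode : ∀ t ∈ Set.Icc (0 : ℝ) 1, ∀ i j, HasDerivWithinAt (fun s => M s i j)
      ((-(J0 n) * A t * M t) i j) (Set.Icc (0 : ℝ) 1) t)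
    (hndg : (M 1 - 1).det ≠ 0) :
    ∃ R > (0 : ℝ), ∀ x : ℝ → EuclideanSpace ℝ (Fin n ⊕ Fin n),
      (∀ t ∈ Set.Icc (0 : ℝ) 1, HasDerivWithinAt x
        (-mv (J0 n) (gradient (H t) (x t))) (Set.Icc (0 : ℝ) 1) t) →
      x 0 = x 1 →
      ∀ t ∈ Set.Icc (0 : ℝ) 1, ‖x t‖ ≤ R := by
  classical
  -- the constant j bounding the action of J₀
  set j : ℝ := max 1 ‖matCLM (J0 n)‖ with hj_def
  have hj1 : (1:ℝ) ≤ j := le_max_left _ _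
  have hjb : ∀ z, ‖mv (J0 n) z‖ ≤ j * ‖z‖ := fun z =>
    (mv_norm_le _ z).trans (mul_le_mul_of_nonneg_right (le_max_right _ _) (norm_nonneg z))
  -- the constant a bounding the action of A t for t ∈ [0,1]
  have hAcont : Continuous A := continuous_pi fun i => continuous_pi fun j => (hA i j).continuous
  have hAn : Continuous fun t => ‖matCLM (A t)‖ :=
    continuous_norm.comp (continuous_matCLM.comp hAcont)
  obtain ⟨ta, -, hta⟩ := isCompact_Icc.exists_isMaxOn (⟨0, by norm_num⟩ :
    (Set.Icc (0:ℝ) 1).Nonempty) hAn.continuousOn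
  set a : ℝ := max 1 ‖matCLM (A ta)‖ with ha_def
  have ha1 : (1:ℝ) ≤ a := le_max_left _ _
  have hab : ∀ t ∈ Set.Icc (0:ℝ) 1, ∀ z, ‖mv (A t) z‖ ≤ a * ‖z‖ := fun t ht z =>
    (mv_norm_le _ z).trans (mul_le_mul_of_nonneg_right
      ((hta ht).trans (le_max_right _ _)) (norm_nonneg z))
  -- the matrix B = 1 - M 1 is invertible
  set B : Matrix (Fin n ⊕ Fin n) (Fin n ⊕ Fin n) ℝ := 1 - M 1 with hB_def
  have hBdet : IsUnit B.det := by
    have h1 : B = -(M 1 - 1) := by rw [hB_def, neg_sub]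
    have h2 : B.det = (M 1 - 1).det := by
      rw [h1, Matrix.det_neg]
      have : Even (Fintype.card (Fin n ⊕ Fin n)) := by
        simp [Fintype.card_sum]
      rw [this.neg_one_pow, one_mul]
    rw [h2]
    exact isUnit_iff_ne_zero.mpr hndg
  have hBinv : B⁻¹ * B = 1 := Matrix.nonsing_inv_mul B hBdet
  set c : ℝ := max 1 ‖matCLM B⁻¹‖ with hc_def
  have hc1 : (1:ℝ) ≤ c := le_max_left _ _
  have hcb : ∀ z : EuclideanSpace ℝ (Fin n ⊕ Fin n), ‖z‖ ≤ c * ‖mv B z‖ := by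
    intro z
    have h1 : mv B⁻¹ (mv B z) = z := by rw [← mv_mul, hBinv, mv_one]
    calc ‖z‖ = ‖mv B⁻¹ (mv B z)‖ := by rw [h1]
      _ ≤ ‖matCLM B⁻¹‖ * ‖mv B z‖ := mv_norm_le _ _
      _ ≤ c * ‖mv B z‖ :=
        mul_le_mul_of_nonneg_right (le_max_right _ _) (norm_nonneg _)
  -- the combination constant P and the smallness parameter ε
  set P : ℝ := Real.exp (j*(a+1)) * j * (c * Real.exp (j*a) + 1) with hP_def
  have hP1 : (1:ℝ) ≤ P := by
    have e1 : (1:ℝ) ≤ Real.exp (j*(a+1)) := Real.one_le_exp (by nlinarith)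
    have e2 : (0:ℝ) < Real.exp (j*a) := Real.exp_pos _
    rw [hP_def]
    have h3 : (1:ℝ) ≤ c * Real.exp (j*a) + 1 := by nlinarith
    have h4 : (1:ℝ)*1 ≤ Real.exp (j*(a+1)) * j :=
      mul_le_mul e1 hj1 zero_le_one (by positivity)
    nlinarith
  have hP0 : (0:ℝ) < P := lt_of_lt_of_le one_pos hP1
  set ε : ℝ := 1 / (2*P) with hε_def
  have hε0 : 0 < ε := by positivity
  have hε1 : ε ≤ 1 := by
    rw [hε_def, div_le_one (by positivity)]; nlinarith
  have hPε : P * ε = 1/2 := by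
    rw [hε_def]; field_simp
  -- the asymptotic bound at level ε, upgraded to a global affine bound
  obtain ⟨Me, hMe0, hMe⟩ := hsub ε hε0
  have hGcont : Continuous (fun p : ℝ × EuclideanSpace ℝ (Fin n ⊕ Fin n) =>
      ‖gradient (H p.1) p.2 - mv (A p.1) p.2‖) := by
    apply Continuous.norm
    apply Continuous.sub (continuous_gradient hH)
    exact (continuous_matCLM.comp (hAcont.comp continuous_fst)).clm_apply continuous_snd
  obtain ⟨p0, -, hp0⟩ := ((isCompact_Icc : IsCompact (Set.Icc (0:ℝ) 1)).prod
      (isCompact_closedBall (0 : EuclideanSpace ℝ (Fin n ⊕ Fin n)) Me)).exists_isMaxOn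
    ⟨(0, 0), Set.mem_prod.mpr ⟨by norm_num, by simp [hMe0.le]⟩⟩ hGcont.continuousOn
  set Ce : ℝ := max 1 ‖gradient (H p0.1) p0.2 - mv (A p0.1) p0.2‖ with hCe_def
  have hCe1 : (1:ℝ) ≤ Ce := le_max_left _ _
  have hCb : ∀ t ∈ Set.Icc (0:ℝ) 1, ∀ z : EuclideanSpace ℝ (Fin n ⊕ Fin n),
      ‖gradient (H t) z - mv (A t) z‖ ≤ ε * ‖z‖ + Ce := by
    intro t ht z
    rcases le_or_gt ‖z‖ Me with hz | hz
    · have hmem : (t, z) ∈ Set.Icc (0:ℝ) 1 ×ˢ Metric.closedBall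
          (0 : EuclideanSpace ℝ (Fin n ⊕ Fin n)) Me :=
        ⟨ht, by simpa [Metric.mem_closedBall, dist_zero_right] using hz⟩
      have := hp0 hmem
      have h2 : ‖gradient (H t) z - mv (A t) z‖ ≤ Ce := this.trans (le_max_right _ _)
      nlinarith [norm_nonneg z, hε0.le]
    · have := hMe z hz t
      nlinarith
  -- the final radius
  refine ⟨2 * P * Ce, by nlinarith, ?_⟩
  intro x hx hper t' ht'
  -- continuity and a maximizer of ‖x ·‖
  have hxc : ContinuousOn x (Set.Icc (0:ℝ) 1) := fun s hs => (hx s hs).continuousWithinAt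
  obtain ⟨t₀, ht₀, hmax⟩ := isCompact_Icc.exists_isMaxOn (⟨0, by norm_num⟩ :
    (Set.Icc (0:ℝ) 1).Nonempty) (continuous_norm.comp_continuousOn hxc)
  set ρ : ℝ := ‖x t₀‖ with hρ_def
  have hρ0 : 0 ≤ ρ := norm_nonneg _
  have hρ : ∀ s ∈ Set.Icc (0:ℝ) 1, ‖x s‖ ≤ ρ := fun s hs => hmax hs
  -- Gronwall estimate 1 : ρ is controlled by ‖x 0‖
  have hgr1 : ∀ s ∈ Set.Icc (0:ℝ) 1,
      ‖x s‖ ≤ gronwallBound ‖x 0‖ (j*(a+ε)) (j*Ce) (s - 0) := by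
    apply norm_le_gronwallBound_of_norm_deriv_right_le hxc
      (fun s hs => hasDerivWithinAt_Ici hs (hx s (Set.Ico_subset_Icc_self hs))) le_rfl
    intro s hs
    have hsI : s ∈ Set.Icc (0:ℝ) 1 := Set.Ico_subset_Icc_self hs
    have h1 : ‖gradient (H s) (x s)‖ ≤ (a + ε) * ‖x s‖ + Ce := by
      have h2 := hab s hsI (x s)
      have h3 := hCb s hsI (x s)
      calc ‖gradient (H s) (x s)‖
          = ‖mv (A s) (x s) + (gradient (H s) (x s) - mv (A s) (x s))‖ := by congr 1; abel
        _ ≤ ‖mv (A s) (x s)‖ + ‖gradient (H s) (x s) - mv (A s) (x s)‖ := norm_add_le _ _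
        _ ≤ (a + ε) * ‖x s‖ + Ce := by nlinarith
    calc ‖-mv (J0 n) (gradient (H s) (x s))‖
        = ‖mv (J0 n) (gradient (H s) (x s))‖ := norm_neg _
      _ ≤ j * ‖gradient (H s) (x s)‖ := hjb _
      _ ≤ j * ((a + ε) * ‖x s‖ + Ce) := mul_le_mul_of_nonneg_left h1 (by nlinarith)
      _ = j*(a+ε) * ‖x s‖ + j*Ce := by ring
  have hgr1' : ρ ≤ Real.exp (j*(a+1)) * (‖x 0‖ + j*Ce) := by
    have h0 := hgr1 t₀ ht₀
    rw [sub_zero] at h0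
    refine h0.trans (gronwallBound_le ‖x 0‖ (j*(a+ε)) (j*Ce) (j*(a+1)) t₀
      (norm_nonneg _) (by nlinarith) (by nlinarith) (by nlinarith) ht₀.1 ht₀.2)
  -- Gronwall estimate 2 : the comparison with the linearized flow
  set x0 : EuclideanSpace ℝ (Fin n ⊕ Fin n) := x 0 with hx0_def
  set φ : ℝ → EuclideanSpace ℝ (Fin n ⊕ Fin n) := fun s => mv (M s) x0 with hφ_def
  have hφd : ∀ s ∈ Set.Icc (0:ℝ) 1,
      HasDerivWithinAt φ (mv (-(J0 n) * A s * M s) x0) (Set.Icc (0:ℝ) 1) s :=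
    fun s hs => hasDeriv_mv x0 (hMode s hs)
  set u : ℝ → EuclideanSpace ℝ (Fin n ⊕ Fin n) := fun s => x s - φ s with hu_def
  have hud : ∀ s ∈ Set.Icc (0:ℝ) 1, HasDerivWithinAt u
      (-mv (J0 n) (gradient (H s) (x s)) - mv (-(J0 n) * A s * M s) x0)
      (Set.Icc (0:ℝ) 1) s :=
    fun s hs => (hx s hs).sub (hφd s hs)
  have huc : ContinuousOn u (Set.Icc (0:ℝ) 1) :=
    fun s hs => ((hud s hs).continuousWithinAt)
  have hu0 : u 0 = 0 := by
    simp only [hu_def, hφ_def, hM0, mv_one, hx0_def, sub_self]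
  have hgr2 : ∀ s ∈ Set.Icc (0:ℝ) 1,
      ‖u s‖ ≤ gronwallBound 0 (j*a) (j*(ε*ρ + Ce)) (s - 0) := by
    apply norm_le_gronwallBound_of_norm_deriv_right_le huc
      (fun s hs => hasDerivWithinAt_Ici hs (hud s (Set.Ico_subset_Icc_self hs)))
      (by rw [hu0, norm_zero])
    intro s hs
    have hsI : s ∈ Set.Icc (0:ℝ) 1 := Set.Ico_subset_Icc_self hs
    have hid : -mv (J0 n) (gradient (H s) (x s)) - mv (-(J0 n) * A s * M s) x0
        = -(mv (J0 n) (mv (A s) (u s))) - mv (J0 n)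
            (gradient (H s) (x s) - mv (A s) (x s)) := by
      simp only [hu_def, hφ_def, mv_mul, mv_neg, mv_sub]
      abel
    rw [hid]
    have h1 : ‖mv (J0 n) (mv (A s) (u s))‖ ≤ j * (a * ‖u s‖) :=
      (hjb _).trans (mul_le_mul_of_nonneg_left (hab s hsI _) (by nlinarith))
    have h2 : ‖mv (J0 n) (gradient (H s) (x s) - mv (A s) (x s))‖ ≤ j * (ε*ρ + Ce) := by
      refine (hjb _).trans (mul_le_mul_of_nonneg_left ?_ (by nlinarith))
      have h3 := hCb s hsI (x s)
      have h4 := hρ s hsI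
      nlinarith
    calc ‖-(mv (J0 n) (mv (A s) (u s))) - mv (J0 n)
            (gradient (H s) (x s) - mv (A s) (x s))‖
        ≤ ‖-(mv (J0 n) (mv (A s) (u s)))‖ + ‖mv (J0 n)
            (gradient (H s) (x s) - mv (A s) (x s))‖ := norm_sub_le _ _
      _ = ‖mv (J0 n) (mv (A s) (u s))‖ + ‖mv (J0 n)
            (gradient (H s) (x s) - mv (A s) (x s))‖ := by rw [norm_neg]
      _ ≤ j * (a * ‖u s‖) + j * (ε*ρ + Ce) := add_le_add h1 h2
      _ = j*a * ‖u s‖ + j*(ε*ρ + Ce) := by ring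
  have hu1 : ‖u 1‖ ≤ Real.exp (j*a) * (j*(ε*ρ + Ce)) := by
    have h0 := hgr2 1 (by norm_num)
    rw [sub_zero] at h0
    refine h0.trans ?_
    have h9 := gronwallBound_le 0 (j*a) (j*(ε*ρ + Ce)) (j*a) 1 le_rfl
      (by nlinarith [mul_nonneg hε0.le hρ0])
      (by nlinarith [mul_le_mul hj1 ha1 zero_le_one (zero_le_one.trans hj1)])
      le_rfl (by norm_num) (by norm_num)
    rw [zero_add] at h9
    exact h9
  -- identify u 1 with B x0 and conclude
  have hu1B : u 1 = mv B x0 := by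
    simp only [hu_def, hφ_def, hB_def, mv_sub_mat, mv_one, hx0_def]
    rw [← hper]
  have hx0b : ‖x0‖ ≤ c * (Real.exp (j*a) * (j*(ε*ρ + Ce))) := by
    refine (hcb x0).trans ?_
    rw [← hu1B]
    exact mul_le_mul_of_nonneg_left hu1 (by nlinarith)
  -- final arithmetic
  have hfin : ρ ≤ P * (ε*ρ + Ce) := by
    have hQ : (0:ℝ) < Real.exp (j*(a+1)) := Real.exp_pos _
    have hS : (0:ℝ) < Real.exp (j*a) := Real.exp_pos _
    have h1 : ρ ≤ Real.exp (j*(a+1)) * (c * (Real.exp (j*a) * (j*(ε*ρ + Ce))) + j*Ce) := by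
      refine hgr1'.trans (mul_le_mul_of_nonneg_left ?_ hQ.le)
      exact add_le_add_left hx0b _
    refine h1.trans ?_
    rw [hP_def]
    nlinarith [mul_nonneg hε0.le hρ0, Real.exp_pos (j*(a+1)), Real.exp_pos (j*a),
      mul_pos hQ hS, mul_nonneg (mul_nonneg hQ.le hS.le) (mul_nonneg hε0.le hρ0)]
  have hρR : ρ ≤ 2 * P * Ce := by
    have h1 : P * (ε*ρ + Ce) = (P*ε) * ρ + P * Ce := by ring
    rw [h1, hPε] at hfin
    linarith
  exact ((hρ t' ht').trans hρR)
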